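/- Let H be a pseudoexpander with n = |V(H)| and m = |Roots(H)|, and let Z be a uniform read-d-times non-deterministic branching program computing φ_H with d ≤ (log₂ n)/10⁵. Then on each computational path P of Z there is a set X of at most (log₂ n)/4000 vertices of P that separates two disjoint subsets of Roots(H) of size at least m^0.999 each. -/

import Mathlib

open scoped Classical

namespace NBPPaper

/-! ### Literals and assignments.
A literal is a pair `(x, b)` of a variable and a polarity (`true` = positive literal).
A set of literals is a `Finset (Var × Bool)`. -/

/-- A set of literals is consistent: no variable occurs both positively and negatively. -/
def Consistent {Var : Type} (S : Finset (Var × Bool)) : Prop :=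
  ∀ x : Var, ¬((x, true) ∈ S ∧ (x, false) ∈ S)

/-- `S` is a set of literals over the variable set `W`. -/
def LitsOver {Var : Type} (W : Finset Var) (S : Finset (Var × Bool)) : Prop :=
  Consistent S ∧ ∀ l ∈ S, l.1 ∈ W

/-- `S` is an assignment of exactly the variables of `W`:
it contains exactly one literal of each variable of `W` and nothing else. -/
def AssignsExactly {Var : Type} (W : Finset Var) (S : Finset (Var × Bool)) : Prop :=
  (∀ l ∈ S, l.1 ∈ W) ∧ ∀ x ∈ W, ∃! b : Bool, (x, b) ∈ S

/-- Satisfaction of a CNF, given as a set of clauses (each clause a set of literals):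
every clause contains a literal of `S`. -/
def SatCNF {V : Type} (φ : Set (Finset (V × Bool))) (S : Finset (V × Bool)) : Prop :=
  ∀ C ∈ φ, ∃ l ∈ C, l ∈ S

/-! ### Nondeterministic branching programs -/

/-- An edge of a nondeterministic branching program over variable type `Var`
with vertex set `Fin n`.  `lab = none` means the edge is unlabelled; the field
`id` allows parallel edges (multigraph). -/
structure NBPEdge (Var : Type) (n : ℕ) where
  src : Fin n
  dst : Fin n
  lab : Option (Var × Bool)
  id : ℕ
deriving DecidableEq

/-- A nondeterministic branching program: a finite DAG (the vertices `Fin n` are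
listed in a topological order, i.e. every edge increases the index) with a single
source (the only vertex with no incoming edge) and a single sink (the only vertex
with no outgoing edge). -/
structure NBP (Var : Type) where
  n : ℕ
  edges : Finset (NBPEdge Var n)
  source : Fin n
  sink : Fin n
  acyc : ∀ e ∈ edges, e.src < e.dst
  source_no_in : ∀ e ∈ edges, e.dst ≠ source
  sink_no_out : ∀ e ∈ edges, e.src ≠ sink
  only_source : ∀ v : Fin n, v ≠ source → ∃ e ∈ edges, e.dst = v
  only_sink : ∀ v : Fin n, v ≠ sink → ∃ e ∈ edges, e.src = v

variable {Var : Type}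

/-- The set of literals labelling the edges of a path (a list of edges). -/
def pathLits [DecidableEq Var] {n : ℕ} (p : List (NBPEdge Var n)) : Finset (Var × Bool) :=
  (p.filterMap NBPEdge.lab).toFinset

/-- The set of variables occurring (as edge labels) on a path. -/
def pathVars [DecidableEq Var] {n : ℕ} (p : List (NBPEdge Var n)) : Finset Var :=
  ((p.filterMap NBPEdge.lab).map Prod.fst).toFinset

/-- The set of vertices visited by a path. -/
def pathVertices {n : ℕ} (p : List (NBPEdge Var n)) : Finset (Fin n) :=
  (p.map NBPEdge.src).toFinset ∪ (p.map NBPEdge.dst).toFinset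

/-- The number of occurrences of the variable `x` as an edge label on the path `p`. -/
def occCount [DecidableEq Var] {n : ℕ} (x : Var) (p : List (NBPEdge Var n)) : ℕ :=
  (p.filterMap NBPEdge.lab).countP (fun l => decide (l.1 = x))

namespace NBP

/-- `p` is a directed path of `Z` from vertex `u` to vertex `v`. -/
def IsPathFrom (Z : NBP Var) (u v : Fin Z.n) (p : List (NBPEdge Var Z.n)) : Prop :=
  p ≠ [] ∧ (∀ e ∈ p, e ∈ Z.edges) ∧ List.Chain' (fun e f => e.dst = f.src) p ∧
    p.head?.map NBPEdge.src = some u ∧ p.getLast?.map NBPEdge.dst = some v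

/-- `p` is a source-sink path of `Z`. -/
def IsSourceSink (Z : NBP Var) (p : List (NBPEdge Var Z.n)) : Prop :=
  Z.IsPathFrom Z.source Z.sink p

/-- A computational path: a source-sink path carrying no two opposite literals. -/
def IsCompPath [DecidableEq Var] (Z : NBP Var) (p : List (NBPEdge Var Z.n)) : Prop :=
  Z.IsSourceSink p ∧ Consistent (pathLits p)

/-- The set `Vars(Z)` of variables whose literals occur on edges of `Z`. -/
def vars [DecidableEq Var] (Z : NBP Var) : Finset Var :=
  Z.edges.biUnion (fun e => (e.lab.map Prod.fst).toFinset)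

/-- `Z` is a (syntactic) read-`d`-times NBP. -/
def ReadTimes [DecidableEq Var] (Z : NBP Var) (d : ℕ) : Prop :=
  ∀ p, Z.IsSourceSink p → ∀ x : Var, occCount x p ≤ d

/-- `Z` is a uniform read-`d`-times NBP: every variable of `Z` occurs exactly `d`
times on every source-sink path. -/
def UniformReadTimes [DecidableEq Var] (Z : NBP Var) (d : ℕ) : Prop :=
  Z.ReadTimes d ∧ ∀ p, Z.IsSourceSink p → ∀ x ∈ Z.vars, occCount x p = d

/-- `Z` computes the Boolean function with variable set `W` whose satisfying
(total) assignments are described by the predicate `F`. -/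
def Computes [DecidableEq Var] (Z : NBP Var) (W : Finset Var)
    (F : Finset (Var × Bool) → Prop) : Prop :=
  Z.vars = W ∧ ∀ S, AssignsExactly W S → (F S ↔ ∃ p, Z.IsCompPath p ∧ pathLits p ⊆ S)

end NBP

/-- `parts` is the partition of the path `p` generated by the vertex set `X`:
`p` is cut into `|X| + 1` consecutive nonempty subpaths whose cut points are
exactly the vertices of `X`. -/
def GeneratesPartition {n : ℕ} (X : Finset (Fin n)) (p : List (NBPEdge Var n))
    (parts : List (List (NBPEdge Var n))) : Prop :=
  p = parts.flatten ∧ parts.length = X.card + 1 ∧ (∀ q ∈ parts, q ≠ []) ∧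
    (parts.dropLast.filterMap (fun q => q.getLast?.map NBPEdge.dst)).toFinset = X

/-- Variables of `Y₁` occur only on parts with even (0-based) index, i.e. odd-numbered
subpaths, and variables of `Y₂` only on parts with odd (0-based) index. -/
def OddEvenSplit [DecidableEq Var] {n : ℕ} (parts : List (List (NBPEdge Var n)))
    (Y₁ Y₂ : Finset Var) : Prop :=
  ∀ k : ℕ, ∀ x ∈ pathVars (parts.getD k []),
    (x ∈ Y₁ → k % 2 = 0) ∧ (x ∈ Y₂ → k % 2 = 1)

/-- The set `X` of vertices of `Z` (containing neither source nor sink) separates the two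
disjoint subsets `Y₁, Y₂` of `Vars(Z)`. -/
def NBP.Separates [DecidableEq Var] (Z : NBP Var) (X : Finset (Fin Z.n))
    (Y₁ Y₂ : Finset Var) : Prop :=
  Disjoint Y₁ Y₂ ∧ Y₁ ⊆ Z.vars ∧ Y₂ ⊆ Z.vars ∧ Z.source ∉ X ∧ Z.sink ∉ X ∧
  ∃ p parts, Z.IsCompPath p ∧ GeneratesPartition X p parts ∧
    (OddEvenSplit parts Y₁ Y₂ ∨ OddEvenSplit parts Y₂ Y₁)

/-! ### Rooted trees -/

/-- A finite rooted tree on (a subset of) the vertex type `V`, given by a parent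
function together with a depth function certifying acyclicity. -/
structure RootedTree (V : Type) [DecidableEq V] where
  verts : Finset V
  root : V
  parent : V → V
  depth : V → ℕ
  root_mem : root ∈ verts
  parent_mem : ∀ v ∈ verts, v ≠ root → parent v ∈ verts
  depth_root : depth root = 0
  depth_parent : ∀ v ∈ verts, v ≠ root → depth v = depth (parent v) + 1

namespace RootedTree

variable {V : Type} [DecidableEq V]

/-- The children of a vertex. -/
def children (T : RootedTree V) (u : V) : Finset V :=
  T.verts.filter (fun v => v ≠ T.root ∧ T.parent v = u)

/-- The leaves of the tree: vertices with no children. -/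
def leaves (T : RootedTree V) : Finset V :=
  T.verts.filter (fun v => T.children v = ∅)

/-- The vertex set of the path from the root to `v` (i.e. `v` and all its ancestors). -/
def pathVerts (T : RootedTree V) (v : V) : Finset V :=
  (Finset.range (T.depth v + 1)).image (fun k => T.parent^[k] v)

/-- The height of the tree: the largest number of vertices on a root-leaf path. -/
def height (T : RootedTree V) : ℕ :=
  (T.verts.sup T.depth) + 1

/-- Every vertex has at most two children. -/
def IsBinary (T : RootedTree V) : Prop :=
  ∀ u ∈ T.verts, (T.children u).card ≤ 2

/-- The tree is extended: none of its leaves has a sibling. -/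
def IsExtended (T : RootedTree V) : Prop :=
  ∀ v ∈ T.verts, v ≠ T.root → T.children v = ∅ → T.children (T.parent v) = {v}

/-- The edge set of the tree (as unordered pairs). -/
def edgeSet (T : RootedTree V) : Finset (Sym2 V) :=
  (T.verts.filter (fun v => v ≠ T.root)).image (fun v => s(v, T.parent v))

end RootedTree

/-! ### Binary-tree-based graphs and pseudoexpanders -/

/-- A binary-tree-based (BTB) graph on the vertex type `V`: an edge-disjoint union of
`m` extended binary rooted trees such that every leaf of one of the trees is a leaf of
exactly two of the trees, any two trees have at most one vertex in common (that vertex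
being a leaf of both), and the roots are pairwise distinct. -/
structure BTB (V : Type) [DecidableEq V] [Fintype V] where
  m : ℕ
  tree : Fin m → RootedTree V
  binary : ∀ i, (tree i).IsBinary
  extended : ∀ i, (tree i).IsExtended
  cover : ∀ v : V, ∃ i, v ∈ (tree i).verts
  edge_disjoint : ∀ i j, i ≠ j → Disjoint ((tree i).edgeSet) ((tree j).edgeSet)
  leaf_two : ∀ i, ∀ v ∈ (tree i).leaves,
    (Finset.univ.filter (fun j => v ∈ (tree j).leaves)).card = 2
  common_le_one : ∀ i j, i ≠ j → ∀ u v,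
    u ∈ (tree i).verts → u ∈ (tree j).verts →
    v ∈ (tree i).verts → v ∈ (tree j).verts → u = v
  common_leaf : ∀ i j, i ≠ j → ∀ v, v ∈ (tree i).verts → v ∈ (tree j).verts →
    v ∈ (tree i).leaves ∧ v ∈ (tree j).leaves
  roots_inj : Function.Injective (fun i => (tree i).root)

namespace BTB

variable {V : Type} [DecidableEq V] [Fintype V]

/-- `ℓ` is the common leaf of the (adjacent) trees `T_i` and `T_j`. -/
def IsCommonLeaf (H : BTB V) (i j : Fin H.m) (ℓ : V) : Prop :=
  i ≠ j ∧ ℓ ∈ (H.tree i).leaves ∧ ℓ ∈ (H.tree j).leaves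

/-- The trees `T_i` and `T_j` are adjacent (share a common leaf); equivalently,
`{t_i, t_j}` is a pseudoedge of `H`. -/
def Adjacent (H : BTB V) (i j : Fin H.m) : Prop :=
  ∃ ℓ, H.IsCommonLeaf i j ℓ

/-- The pseudodegree of the root `t_i`: the number of pseudoedges containing it. -/
noncomputable def pseudodegree (H : BTB V) (i : Fin H.m) : ℕ :=
  (Finset.univ.filter (fun j => H.Adjacent i j)).card

/-- The set of root vertices of `H`. -/
def rootSet (H : BTB V) : Finset V :=
  Finset.univ.image (fun i => (H.tree i).root)

/-- A pseudomatching: a set of pseudoedges (recorded as ordered pairs of root indices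
with `i < j`) no two of which share an end. -/
def IsPseudomatching (H : BTB V) (M : Finset (Fin H.m × Fin H.m)) : Prop :=
  (∀ e ∈ M, e.1 < e.2 ∧ H.Adjacent e.1 e.2) ∧
  ∀ e ∈ M, ∀ f ∈ M, e ≠ f → e.1 ≠ f.1 ∧ e.1 ≠ f.2 ∧ e.2 ≠ f.1 ∧ e.2 ≠ f.2

/-- A pseudomatching between the disjoint sets `U` and `W` of roots (given by their
indices): every pseudoedge of `M` has one end in `U` and the other in `W`. -/
def IsPseudomatchingBetween (H : BTB V) (M : Finset (Fin H.m × Fin H.m))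
    (U W : Finset (Fin H.m)) : Prop :=
  H.IsPseudomatching M ∧ ∀ e ∈ M, (e.1 ∈ U ∧ e.2 ∈ W) ∨ (e.1 ∈ W ∧ e.2 ∈ U)

/-- The set `⋃M` of root vertices matched by the pseudomatching `M`. -/
def matchingRoots (H : BTB V) (M : Finset (Fin H.m × Fin H.m)) : Finset V :=
  M.biUnion (fun e => {(H.tree e.1).root, (H.tree e.2).root})

/-- The vertex set `V(P_{i,j})` of the path connecting the roots `t_i` and `t_j`
through their common leaf `ℓ`. -/
def clauseVerts (H : BTB V) (i j : Fin H.m) (ℓ : V) : Finset V :=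
  (H.tree i).pathVerts ℓ ∪ (H.tree j).pathVerts ℓ

/-- `S` satisfies the monotone CNF `φ_H`. -/
def SatisfiesPhi (H : BTB V) (S : Finset (V × Bool)) : Prop :=
  ∀ i j ℓ, H.IsCommonLeaf i j ℓ → ∃ v ∈ H.clauseVerts i j ℓ, (v, true) ∈ S

/-- `S` falsifies no clause of `φ_H`. -/
def FalsifiesNoClause (H : BTB V) (S : Finset (V × Bool)) : Prop :=
  ∀ i j ℓ, H.IsCommonLeaf i j ℓ → ¬(∀ v ∈ H.clauseVerts i j ℓ, (v, false) ∈ S)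

/-- `H` is a pseudoexpander. -/
def IsPseudoexpander (H : BTB V) : Prop :=
  (∀ i, ((H.tree i).height : ℝ) ≤ Real.logb 2 H.m / 4.9 + 3) ∧
  ∀ U W : Finset (Fin H.m), Disjoint U W →
    (H.m : ℝ) ^ (0.999 : ℝ) ≤ U.card → (H.m : ℝ) ^ (0.999 : ℝ) ≤ W.card →
    ∃ M, H.IsPseudomatchingBetween M U W ∧ (H.m : ℝ) ^ (0.999 : ℝ) / 3 ≤ M.card

/-! #### The probability space on the satisfying assignments of `φ_H` -/

/-- The set `SAT(H)` of satisfying assignments of `φ_H` (total assignments of the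
variables `V(H)` satisfying every clause). -/
noncomputable def SATH (H : BTB V) : Finset (Finset (V × Bool)) :=
  Finset.univ.filter (fun S => AssignsExactly Finset.univ S ∧ H.SatisfiesPhi S)

/-- `Fix(S)`: the set of leaf variables `ℓ_{i,j}` occurring positively in `S` such that
all the other variables of the clause `C_{i,j}` occur negatively in `S`. -/
def Fix (H : BTB V) (S : Finset (V × Bool)) : Set V :=
  {ℓ | ∃ i j, H.IsCommonLeaf i j ℓ ∧ (ℓ, true) ∈ S ∧
      ∀ v ∈ H.clauseVerts i j ℓ, v ≠ ℓ → (v, false) ∈ S}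

/-- The probability weight of `S`: `(1/2) ^ |V(H) \ Fix(S)|`. -/
noncomputable def weight (H : BTB V) (S : Finset (V × Bool)) : ℝ :=
  (1 / 2 : ℝ) ^ (Fintype.card V - (H.Fix S).ncard)

/-- The probability of the event `E` in the probability space on `SAT(H)`. -/
noncomputable def Pr (H : BTB V) (E : Finset (V × Bool) → Prop) : ℝ :=
  ∑ S ∈ H.SATH.filter E, H.weight S

/-- `|S \ Fix(S)|`: the number of literals of `S` that are not fixed. -/
noncomputable def nonFixedCount (H : BTB V) (S : Finset (V × Bool)) : ℕ :=
  (S.filter (fun l => ¬(l.2 = true ∧ l.1 ∈ H.Fix S))).card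

/-- `v` and `w` are siblings (in one of the trees of `H`). -/
def Sibling (H : BTB V) (v w : V) : Prop :=
  ∃ k, v ∈ (H.tree k).verts ∧ w ∈ (H.tree k).verts ∧
    v ≠ (H.tree k).root ∧ w ≠ (H.tree k).root ∧ v ≠ w ∧
    (H.tree k).parent v = (H.tree k).parent w

/-- `S` respects the pseudoedge `{t_i, t_j}`: all non-root variables of `C_{i,j}` occur
negatively in `S` and the siblings of all internal variables of `C_{i,j}` occur
positively in `S`. -/
def Respects (H : BTB V) (i j : Fin H.m) (S : Finset (V × Bool)) : Prop :=
  ∃ ℓ, H.IsCommonLeaf i j ℓ ∧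
    (∀ v ∈ H.clauseVerts i j ℓ,
      v ≠ (H.tree i).root → v ≠ (H.tree j).root → (v, false) ∈ S) ∧
    (∀ v ∈ H.clauseVerts i j ℓ,
      v ≠ (H.tree i).root → v ≠ (H.tree j).root → v ≠ ℓ →
      ∀ w, H.Sibling v w → (w, true) ∈ S)

/-- `S` is `η`-comfortable w.r.t. the pseudomatching `M`: `S` falsifies no clause of
`φ_H` and respects at least `η·|M|` pseudoedges of `M`. -/
noncomputable def Comfortable (H : BTB V) (M : Finset (Fin H.m × Fin H.m)) (η : ℝ)
    (S : Finset (V × Bool)) : Prop :=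
  H.FalsifiesNoClause S ∧
    η * M.card ≤ ((M.filter (fun e => H.Respects e.1 e.2 S)).card : ℝ)

/-- `S` is a guarded set of literals. -/
def Guarded (H : BTB V) (S : Finset (V × Bool)) : Prop :=
  Consistent S ∧ ∀ i j ℓ, H.IsCommonLeaf i j ℓ →
    ((ℓ, true) ∉ S ∧ (ℓ, false) ∉ S) ∨
    (∃ v ∈ H.clauseVerts i j ℓ, v ≠ ℓ ∧ (v, true) ∈ S) ∨
    ((ℓ, true) ∈ S ∧ ∀ v ∈ H.clauseVerts i j ℓ, v ≠ ℓ → (v, false) ∈ S)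

/-! #### Matching CNFs and matching OR-CNFs -/

/-- The 'half clause' `C^{1/2}_{i,j}`: the positive clause on the vertices of the path
from `t_i` (if `side = true`) or from `t_j` (if `side = false`) to the common leaf `ℓ`. -/
def halfClause (H : BTB V) (i j : Fin H.m) (ℓ : V) (side : Bool) : Finset (V × Bool) :=
  (if side then (H.tree i).pathVerts ℓ else (H.tree j).pathVerts ℓ).image (fun v => (v, true))

/-- The matching CNF w.r.t. `M` determined by the side choice `c`: one half clause per
pseudoedge of `M`.  The formulas of `CNF(M)` are exactly the CNFs `matchingCNF H M c`. -/
def matchingCNF (H : BTB V) (M : Finset (Fin H.m × Fin H.m))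
    (c : Fin H.m × Fin H.m → Bool) : Set (Finset (V × Bool)) :=
  {C | ∃ e ∈ M, ∃ ℓ, H.IsCommonLeaf e.1 e.2 ℓ ∧ C = H.halfClause e.1 e.2 ℓ (c e)}

/-- A matching OR-CNF w.r.t. `M` is determined by a map `Ψ` assigning to each assignment
`S₀` of the variables `V(H) \ ⋃M` a matching CNF (given by its side choice `Ψ S₀`);
the formula is `⋁_{S₀} (Conj(S₀) ∧ matchingCNF H M (Ψ S₀))`.  `S` satisfies it iff for
(the) `S₀ ⊆ S`, `S` satisfies the corresponding matching CNF. -/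
def SatORCNF (H : BTB V) (M : Finset (Fin H.m × Fin H.m))
    (Ψ : Finset (V × Bool) → (Fin H.m × Fin H.m) → Bool) (S : Finset (V × Bool)) : Prop :=
  ∃ S₀, AssignsExactly (Finset.univ \ H.matchingRoots M) S₀ ∧ S₀ ⊆ S ∧
    SatCNF (H.matchingCNF M (Ψ S₀)) S

/-- `X` is an `(a, b)`-determining set for the NBP `Z` computing `φ_H`. -/
def IsDeterminingSet (H : BTB V) (Z : NBP V) (a b : ℝ) (X : Finset (Fin Z.n)) : Prop :=
  (X.card : ℝ) ≤ a ∧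
  ∃ M : Finset (Fin H.m × Fin H.m), H.IsPseudomatching M ∧ b ≤ (M.card : ℝ) ∧
    ∃ Ψ : Finset (V × Bool) → (Fin H.m × Fin H.m) → Bool,
      ∀ p, Z.IsCompPath p → X ⊆ pathVertices p → H.SatORCNF M Ψ (pathLits p)

end BTB

/-!
Split the roots into halves `F` and `G`; on a computational path `p` every variable is read at
most `d` times. If half of `F` (or of `G`) does not occur on `p`, the single part `p` will do.
Otherwise cut `p` after half of the variables of `F ∪ G` occurring on `p` have been read: then for
one side, say `F`, half of its occurring variables are read before the cut, while half of those of
`G` are not. Keeping only these, the prefix avoids the kept part of `G`, and each kept variable of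
`F` is read once less on the suffix; so recursing on the suffix stops after `2d` cuts, losing a
factor `4` per cut. This cuts `p` at `≤ 2d` vertices into parts alternately avoiding `A ⊆ F` and
`B ⊆ G` with `|A|, |B| ≥ m / 2 ^ (4d + 3)`; the cut vertices are distinct because an NBP is
topologically ordered. The height bound on the trees gives `log n ≤ (1 + 1/4.9) log m + 3`, so
`d ≤ log n / 10⁵` forces `2 ^ (4d + 3) ≤ m ^ 0.001`. Finally `d = 0` is impossible: the program
would then accept the all-false assignment, which falsifies `φ_H`.
-/

section Occurrences

variable {Var : Type} [DecidableEq Var] {n : ℕ}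

lemma occCount_append (x : Var) (l₁ l₂ : List (NBPEdge Var n)) :
    occCount x (l₁ ++ l₂) = occCount x l₁ + occCount x l₂ := by
  simp [occCount, List.countP_append]

lemma occCount_take_add_occCount_drop (x : Var) (q : List (NBPEdge Var n)) (k : ℕ) :
    occCount x (q.take k) + occCount x (q.drop k) = occCount x q := by
  rw [← occCount_append, List.take_append_drop]

lemma occCount_pos_iff {x : Var} {q : List (NBPEdge Var n)} :
    0 < occCount x q ↔ x ∈ pathVars q := by
  simp [occCount, pathVars, List.countP_pos_iff]

lemma pathVars_append (l₁ l₂ : List (NBPEdge Var n)) :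
    pathVars (l₁ ++ l₂) = pathVars l₁ ∪ pathVars l₂ := by
  simp [pathVars, List.toFinset_append]

lemma card_pathVars_le_length (q : List (NBPEdge Var n)) : (pathVars q).card ≤ q.length :=
  (List.toFinset_card_le _).trans ((List.length_map _).le.trans (List.length_filterMap_le _ _))

lemma pathVars_take_subset (q : List (NBPEdge Var n)) (k : ℕ) :
    pathVars (q.take k) ⊆ pathVars q := by
  conv_rhs => rw [← List.take_append_drop k q, pathVars_append]
  exact Finset.subset_union_left

lemma occCount_drop_le (x : Var) (σ : List (NBPEdge Var n)) (k : ℕ) :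
    occCount x (σ.drop k) ≤ occCount x σ := by
  have := occCount_take_add_occCount_drop x σ k
  omega

lemma occCount_drop_lt {x : Var} {σ : List (NBPEdge Var n)} {k : ℕ}
    (hx : x ∈ pathVars (σ.take k)) : occCount x (σ.drop k) < occCount x σ := by
  have := occCount_take_add_occCount_drop x σ k
  have := occCount_pos_iff.mpr hx
  omega

end Occurrences

section AlternatingSplit

variable {Var : Type} [DecidableEq Var] {n : ℕ}

lemma oddEvenSplit_nil (A B : Finset Var) :
    OddEvenSplit ([] : List (List (NBPEdge Var n))) A B := by
  intro k x hx
  simp [pathVars] at hx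

lemma oddEvenSplit_cons {q : List (NBPEdge Var n)} {parts : List (List (NBPEdge Var n))}
    {A B : Finset Var} (hq : Disjoint (pathVars q) B) (h : OddEvenSplit parts B A) :
    OddEvenSplit (q :: parts) A B := by
  rintro (_ | k) x hx
  · exact ⟨fun _ => rfl, fun hB => absurd hB (Finset.disjoint_left.mp hq hx)⟩
  · have := h k x hx
    exact ⟨fun hA => by have := this.2 hA; omega, fun hB => by have := this.1 hB; omega⟩

lemma oddEvenSplit_append_head {q r : List (NBPEdge Var n)} {parts : List (List (NBPEdge Var n))}
    {A B : Finset Var} (hq : Disjoint (pathVars q) B) (h : OddEvenSplit (r :: parts) A B) :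
    OddEvenSplit ((q ++ r) :: parts) A B := by
  rintro (_ | k) x hx
  · rw [List.getD_cons_zero, pathVars_append, Finset.mem_union] at hx
    rcases hx with hx | hx
    · exact ⟨fun _ => rfl, fun hB => absurd hB (Finset.disjoint_left.mp hq hx)⟩
    · exact h 0 x hx
  · exact h (k + 1) x hx

def IsAlternatingSplit (r : ℕ) (σ : List (NBPEdge Var n)) (A B : Finset Var) : Prop :=
  ∃ parts : List (List (NBPEdge Var n)), parts.flatten = σ ∧ (∀ q ∈ parts, q ≠ []) ∧
    parts.length ≤ r ∧ (OddEvenSplit parts A B ∨ OddEvenSplit parts B A)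

namespace IsAlternatingSplit

variable {r r' : ℕ} {σ q : List (NBPEdge Var n)} {A B : Finset Var}

lemma symm (h : IsAlternatingSplit r σ A B) : IsAlternatingSplit r σ B A := by
  obtain ⟨parts, hσ, hne, hlen, hsplit⟩ := h
  exact ⟨parts, hσ, hne, hlen, hsplit.symm⟩

lemma mono (h : IsAlternatingSplit r σ A B) (hr : r ≤ r') : IsAlternatingSplit r' σ A B := by
  obtain ⟨parts, hσ, hne, hlen, hsplit⟩ := h
  exact ⟨parts, hσ, hne, hlen.trans hr, hsplit⟩

lemma nil : IsAlternatingSplit 0 ([] : List (NBPEdge Var n)) A B :=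
  ⟨[], rfl, by simp, le_rfl, .inl (oddEvenSplit_nil A B)⟩

lemma prepend (hq : Disjoint (pathVars q) B) (h : IsAlternatingSplit r σ A B) :
    IsAlternatingSplit (r + 1) (q ++ σ) A B := by
  obtain ⟨parts, rfl, hne, hlen, hAB | hBA⟩ := h
  · cases parts with
    | nil =>
      by_cases hq₀ : q = []
      · exact ⟨[], by simp [hq₀], by simp, by simp, .inl (oddEvenSplit_nil A B)⟩
      · exact ⟨[q], by simp, by simpa using hq₀, by simp,
          .inl (oddEvenSplit_cons hq (oddEvenSplit_nil B A))⟩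
    | cons r₀ rest =>
      refine ⟨(q ++ r₀) :: rest, by simp, ?_, by simpa using hlen.trans (Nat.le_succ r),
        .inl (oddEvenSplit_append_head hq hAB)⟩
      simp only [List.mem_cons, forall_eq_or_imp] at hne ⊢
      exact ⟨by simp [hne.1], hne.2⟩
  · by_cases hq₀ : q = []
    · exact ⟨parts, by simp [hq₀], hne, hlen.trans (Nat.le_succ r), .inr hBA⟩
    · refine ⟨q :: parts, by simp, ?_, by simpa using hlen, .inl (oddEvenSplit_cons hq hBA)⟩
      simpa [hq₀] using hne

end IsAlternatingSplit

end AlternatingSplit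

lemma exists_eq_of_le_of_le_add_one {f : ℕ → ℕ} (h0 : f 0 = 0)
    (hstep : ∀ k, f (k + 1) ≤ f k + 1) {N t : ℕ} (ht : t ≤ f N) : ∃ k ≤ N, f k = t := by
  induction N with
  | zero => exact ⟨0, le_rfl, by omega⟩
  | succ N ih =>
    by_cases htN : t ≤ f N
    · obtain ⟨k, hk, hfk⟩ := ih htN
      exact ⟨k, hk.trans N.le_succ, hfk⟩
    · exact ⟨N + 1, le_rfl, by have := hstep N; omega⟩

section BalancedSplit

variable {Var : Type} [DecidableEq Var] {n : ℕ}

/-- The cut is placed where half of the variables of `F ∪ G` occurring on `σ` have been read. -/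
lemma exists_balanced_cut (σ : List (NBPEdge Var n)) {F G : Finset Var} (hFG : Disjoint F G) :
    ∃ k, ((F ∩ pathVars σ).card ≤ 2 * (F ∩ pathVars (σ.take k)).card ∧
        2 * (G ∩ pathVars (σ.take k)).card ≤ (G ∩ pathVars σ).card) ∨
      (2 * (F ∩ pathVars (σ.take k)).card ≤ (F ∩ pathVars σ).card ∧
        (G ∩ pathVars σ).card ≤ 2 * (G ∩ pathVars (σ.take k)).card) := by
  have hcard : ∀ P : Finset Var, ((F ∪ G) ∩ P).card = (F ∩ P).card + (G ∩ P).card := fun P => by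
    rw [Finset.union_inter_distrib_right, Finset.card_union_of_disjoint
      (hFG.mono Finset.inter_subset_left Finset.inter_subset_left)]
  set f : ℕ → ℕ := fun k => ((F ∪ G) ∩ pathVars (σ.take k)).card
  have h0 : f 0 = 0 := by simp [f, pathVars]
  have hstep : ∀ k, f (k + 1) ≤ f k + 1 := fun k => by
    have hsub : (F ∪ G) ∩ pathVars (σ.take (k + 1)) ⊆
        (F ∪ G) ∩ pathVars (σ.take k) ∪ pathVars σ[k]?.toList := by
      rw [List.take_add_one, pathVars_append, Finset.inter_union_distrib_left]
      exact Finset.union_subset_union le_rfl Finset.inter_subset_right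
    have hone : (pathVars σ[k]?.toList).card ≤ 1 :=
      (card_pathVars_le_length _).trans (by cases σ[k]? <;> simp)
    calc f (k + 1) ≤ _ := Finset.card_le_card hsub
      _ ≤ _ := Finset.card_union_le _ _
      _ ≤ f k + 1 := by simp only [f]; omega
  obtain ⟨k, -, hk⟩ := exists_eq_of_le_of_le_add_one h0 hstep
    (t := ((F ∪ G) ∩ pathVars σ).card / 2 + ((F ∪ G) ∩ pathVars σ).card % 2)
    (N := σ.length) (by simp only [f, List.take_length]; omega)
  have hF := Finset.card_le_card (Finset.inter_subset_inter_left (pathVars_take_subset σ k) :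
    F ∩ pathVars (σ.take k) ⊆ F ∩ pathVars σ)
  have hG := Finset.card_le_card (Finset.inter_subset_inter_left (pathVars_take_subset σ k) :
    G ∩ pathVars (σ.take k) ⊆ G ∩ pathVars σ)
  simp only [f, hcard] at hk
  exact ⟨k, by omega⟩

def AdmitsAlternatingSplit (r c : ℕ) (σ : List (NBPEdge Var n)) (F G : Finset Var) : Prop :=
  ∃ A ⊆ F, ∃ B ⊆ G, F.card ≤ c * A.card ∧ G.card ≤ c * B.card ∧ IsAlternatingSplit r σ A B

namespace AdmitsAlternatingSplit

variable {r r' c c' k : ℕ} {σ q : List (NBPEdge Var n)} {F G F₁ G₁ : Finset Var}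

lemma symm (h : AdmitsAlternatingSplit r c σ F G) : AdmitsAlternatingSplit r c σ G F := by
  obtain ⟨A, hA, B, hB, hAc, hBc, hsplit⟩ := h
  exact ⟨B, hB, A, hA, hBc, hAc, hsplit.symm⟩

lemma mono (h : AdmitsAlternatingSplit r c σ F G) (hr : r ≤ r') (hc : c ≤ c') :
    AdmitsAlternatingSplit r' c' σ F G := by
  obtain ⟨A, hA, B, hB, hAc, hBc, hsplit⟩ := h
  exact ⟨A, hA, B, hB, hAc.trans (Nat.mul_le_mul_right _ hc),
    hBc.trans (Nat.mul_le_mul_right _ hc), hsplit.mono hr⟩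

lemma prepend (h : AdmitsAlternatingSplit r c σ F₁ G₁) (hF : F₁ ⊆ F) (hG : G₁ ⊆ G)
    (hFc : F.card ≤ k * F₁.card) (hGc : G.card ≤ k * G₁.card) (hq : Disjoint (pathVars q) G₁) :
    AdmitsAlternatingSplit (r + 1) (k * c) (q ++ σ) F G := by
  obtain ⟨A, hA, B, hB, hAc, hBc, hsplit⟩ := h
  refine ⟨A, hA.trans hF, B, hB.trans hG, ?_, ?_, hsplit.prepend (hq.mono_right hB)⟩
  · calc F.card ≤ k * F₁.card := hFc
      _ ≤ k * (c * A.card) := Nat.mul_le_mul_left _ hAc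
      _ = k * c * A.card := (Nat.mul_assoc _ _ _).symm
  · calc G.card ≤ k * G₁.card := hGc
      _ ≤ k * (c * B.card) := Nat.mul_le_mul_left _ hBc
      _ = k * c * B.card := (Nat.mul_assoc _ _ _).symm

end AdmitsAlternatingSplit

lemma admitsAlternatingSplit_of_card_le {σ : List (NBPEdge Var n)} {F : Finset Var}
    (G : Finset Var) (h : F.card ≤ 2 * (F \ pathVars σ).card) :
    AdmitsAlternatingSplit 1 2 σ F G := by
  refine ⟨F \ pathVars σ, Finset.sdiff_subset, G, subset_rfl, h, by omega, ?_⟩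
  simpa using (IsAlternatingSplit.nil.prepend Finset.disjoint_sdiff).symm

lemma admitsAlternatingSplit_of_cut {r c k : ℕ} {σ : List (NBPEdge Var n)} {F G : Finset Var}
    (h : AdmitsAlternatingSplit r c (σ.drop k) (F ∩ pathVars (σ.take k))
      (G \ pathVars (σ.take k)))
    (hF : F.card ≤ 4 * (F ∩ pathVars (σ.take k)).card)
    (hG : G.card ≤ 4 * (G \ pathVars (σ.take k)).card) :
    AdmitsAlternatingSplit (r + 1) (4 * c) σ F G := by
  simpa using h.prepend Finset.inter_subset_left Finset.sdiff_subset hF hG Finset.disjoint_sdiff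

theorem admitsAlternatingSplit_of_occCount_le {a b : ℕ} {σ : List (NBPEdge Var n)}
    {F G : Finset Var} (hFG : Disjoint F G) (hF : ∀ x ∈ F, occCount x σ ≤ a)
    (hG : ∀ x ∈ G, occCount x σ ≤ b) :
    AdmitsAlternatingSplit (a + b + 1) (2 * 4 ^ (a + b)) σ F G := by
  induction hK : a + b using Nat.strong_induction_on generalizing a b σ F G with
  | _ K ih =>
  have h4K : 2 ≤ 2 * 4 ^ K := by have := Nat.one_le_pow K 4 (by norm_num); omega
  by_cases hFdone : F.card ≤ 2 * (F \ pathVars σ).card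
  · exact (admitsAlternatingSplit_of_card_le G hFdone).mono (by omega) h4K
  by_cases hGdone : G.card ≤ 2 * (G \ pathVars σ).card
  · exact (admitsAlternatingSplit_of_card_le F hGdone).symm.mono (by omega) h4K
  have hFσ := Finset.card_inter_add_card_sdiff F (pathVars σ)
  have hGσ := Finset.card_inter_add_card_sdiff G (pathVars σ)
  obtain ⟨x, hx⟩ : (F ∩ pathVars σ).Nonempty := Finset.card_pos.mp (by omega)
  obtain ⟨y, hy⟩ : (G ∩ pathVars σ).Nonempty := Finset.card_pos.mp (by omega)
  rw [Finset.mem_inter, ← occCount_pos_iff] at hx hy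
  have ha := hF x hx.1
  have hb := hG y hy.1
  obtain ⟨k, hcut⟩ := exists_balanced_cut σ hFG
  have hF₀ := Finset.card_inter_add_card_sdiff F (pathVars (σ.take k))
  have hG₀ := Finset.card_inter_add_card_sdiff G (pathVars (σ.take k))
  rcases hcut with hcut | hcut
  · have hrec := ih (a - 1 + b) (by omega) (σ := σ.drop k) (F := F ∩ pathVars (σ.take k))
      (G := G \ pathVars (σ.take k)) (hFG.mono Finset.inter_subset_left Finset.sdiff_subset)
      (fun z hz => Nat.le_sub_one_of_lt
        ((occCount_drop_lt (Finset.mem_inter.mp hz).2).trans_le (hF z (Finset.mem_inter.mp hz).1)))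
      (fun z hz => (occCount_drop_le z σ k).trans (hG z (Finset.mem_sdiff.mp hz).1)) rfl
    refine (admitsAlternatingSplit_of_cut hrec (by omega) (by omega)).mono (by omega) (le_of_eq ?_)
    rw [← hK, show a + b = a - 1 + b + 1 by omega, pow_succ]
    ring
  · have hrec := ih (b - 1 + a) (by omega) (σ := σ.drop k) (F := G ∩ pathVars (σ.take k))
      (G := F \ pathVars (σ.take k)) (hFG.symm.mono Finset.inter_subset_left Finset.sdiff_subset)
      (fun z hz => Nat.le_sub_one_of_lt
        ((occCount_drop_lt (Finset.mem_inter.mp hz).2).trans_le (hG z (Finset.mem_inter.mp hz).1)))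
      (fun z hz => (occCount_drop_le z σ k).trans (hF z (Finset.mem_sdiff.mp hz).1)) rfl
    refine (admitsAlternatingSplit_of_cut hrec (by omega) (by omega)).symm.mono (by omega)
      (le_of_eq ?_)
    rw [← hK, show a + b = b - 1 + a + 1 by omega, pow_succ]
    ring

end BalancedSplit

section CutPoints

variable {β γ : Type*}

lemma filterMap_getLast?_sublist (f : β → γ) (L : List (List β)) :
    (L.filterMap (fun q => q.getLast?.map f)).Sublist (L.flatten.map f) := by
  induction L with
  | nil => simp
  | cons q L ih =>
    rcases List.eq_nil_or_concat q with rfl | ⟨q', e, rfl⟩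
    · simpa [List.filterMap_cons] using ih
    · simpa using (List.sublist_append_right (q'.map f) [f e]).append ih

lemma length_filterMap_getLast? (f : β → γ) {L : List (List β)} (hL : ∀ q ∈ L, q ≠ []) :
    (L.filterMap (fun q => q.getLast?.map f)).length = L.length := by
  rw [List.length_filterMap_eq_countP, List.countP_eq_length]
  intro q hq
  simpa [List.getLast?_eq_none_iff] using hL q hq

lemma exists_infix_of_mem_filterMap_getLast? (f : β → γ) {L : List (List β)}
    (hL : ∀ q ∈ L, q ≠ []) {v : γ} (hv : v ∈ L.dropLast.filterMap (fun q => q.getLast?.map f)) :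
    ∃ e e', [e, e'] <:+: L.flatten ∧ f e = v := by
  induction L with
  | nil => simp at hv
  | cons q L ih =>
    rcases L with _ | ⟨r, t⟩
    · simp at hv
    rw [List.dropLast_cons_of_ne_nil (List.cons_ne_nil r t), List.filterMap_cons] at hv
    rcases hq : q.getLast? with _ | e
    · rw [hq] at hv
      obtain ⟨e, e', hinf, rfl⟩ := ih (fun q' h => hL q' (List.mem_cons_of_mem _ h)) hv
      exact ⟨e, e', hinf.trans (List.suffix_append _ _).isInfix, rfl⟩
    rw [hq] at hv
    rcases List.mem_cons.mp hv with rfl | hv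
    · obtain ⟨q', rfl⟩ := List.getLast?_eq_some_iff.mp hq
      obtain ⟨e', r', rfl⟩ := List.exists_cons_of_ne_nil (hL r (by simp))
      exact ⟨e, e', ⟨q', r' ++ t.flatten, by simp⟩, rfl⟩
    · obtain ⟨e, e', hinf, rfl⟩ := ih (fun q' h => hL q' (List.mem_cons_of_mem _ h)) hv
      exact ⟨e, e', hinf.trans (List.suffix_append _ _).isInfix, rfl⟩

end CutPoints

namespace NBP

variable {Var : Type} {Z : NBP Var} {u v : Fin Z.n} {p : List (NBPEdge Var Z.n)}

lemma IsPathFrom.isChain (hp : Z.IsPathFrom u v p) :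
    List.IsChain (fun e f : NBPEdge Var Z.n => e.dst = f.src) p :=
  hp.2.2.1

lemma IsPathFrom.nodup_map_dst (hp : Z.IsPathFrom u v p) : (p.map NBPEdge.dst).Nodup := by
  have hlt : List.IsChain (fun e f : NBPEdge Var Z.n => e.dst < f.dst) p :=
    hp.isChain.imp_of_mem_imp fun e f _ hf (hef : e.dst = f.src) => hef ▸ Z.acyc f (hp.2.1 f hf)
  exact ((List.isChain_map _).mpr hlt).pairwise.nodup

lemma IsSourceSink.dst_mem_of_infix (hp : Z.IsSourceSink p) {e e' : NBPEdge Var Z.n}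
    (h : [e, e'] <:+: p) :
    e.dst ∈ pathVertices p ∧ e.dst ≠ Z.source ∧ e.dst ≠ Z.sink := by
  have he : e ∈ p := h.subset (by simp)
  have he' : e' ∈ p := h.subset (by simp)
  have hee' : e.dst = e'.src :=
    (List.isChain_pair (R := fun e f : NBPEdge Var Z.n => e.dst = f.src)).mp (hp.isChain.infix h)
  refine ⟨Finset.mem_union_right _ (List.mem_toFinset.mpr (List.mem_map_of_mem he)),
    Z.source_no_in e (hp.2.1 e he), ?_⟩
  rw [hee']
  exact Z.sink_no_out e' (hp.2.1 e' he')

variable [DecidableEq Var]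

theorem IsCompPath.exists_separates (hp : Z.IsCompPath p) {r : ℕ}
    {A B : Finset Var} (hsplit : IsAlternatingSplit r p A B) (hAB : Disjoint A B)
    (hA : A ⊆ Z.vars) (hB : B ⊆ Z.vars) :
    ∃ X ⊆ pathVertices p, X.card + 1 ≤ r ∧ Z.Separates X A B := by
  obtain ⟨parts, rfl, hne, hlen, hoddEven⟩ := hsplit
  set cuts := parts.dropLast.filterMap (fun q => q.getLast?.map NBPEdge.dst)
  have hparts : parts ≠ [] := fun h => hp.1.1 (by simp [h])
  have hcuts : cuts.toFinset.card + 1 = parts.length := by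
    have hnodup : cuts.Nodup := hp.1.nodup_map_dst.sublist
      ((filterMap_getLast?_sublist _ _).trans ((List.dropLast_sublist parts).flatten.map _))
    rw [List.toFinset_card_of_nodup hnodup, length_filterMap_getLast? _
      (fun q hq => hne q (List.dropLast_subset parts hq)), List.length_dropLast]
    have := List.length_pos_iff.mpr hparts
    omega
  have hcut : ∀ v ∈ cuts.toFinset,
      v ∈ pathVertices parts.flatten ∧ v ≠ Z.source ∧ v ≠ Z.sink := fun v hv => by
    obtain ⟨e, e', hinf, rfl⟩ :=
      exists_infix_of_mem_filterMap_getLast? _ hne (List.mem_toFinset.mp hv)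
    exact hp.1.dst_mem_of_infix hinf
  exact ⟨cuts.toFinset, fun v hv => (hcut v hv).1, by omega, hAB, hA, hB,
    fun h => (hcut _ h).2.1 rfl, fun h => (hcut _ h).2.2 rfl, parts.flatten, parts, hp,
    ⟨rfl, hcuts.symm, hne, rfl⟩, hoddEven⟩

end NBP

namespace RootedTree

variable {V : Type} [DecidableEq V] {T : RootedTree V}

lemma card_filter_depth_eq_le (hT : T.IsBinary) (k : ℕ) :
    (T.verts.filter (fun v => T.depth v = k)).card ≤ 2 ^ k := by
  induction k with
  | zero =>
    have hsub : T.verts.filter (fun v => T.depth v = 0) ⊆ {T.root} := fun v hv => by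
      obtain ⟨hv, hdv⟩ := Finset.mem_filter.mp hv
      by_contra hne
      have := T.depth_parent v hv (Finset.notMem_singleton.mp hne)
      omega
    simpa using Finset.card_le_card hsub
  | succ k ih =>
    have hsub : T.verts.filter (fun v => T.depth v = k + 1) ⊆
        (T.verts.filter (fun v => T.depth v = k)).biUnion T.children := fun v hv => by
      obtain ⟨hv, hdv⟩ := Finset.mem_filter.mp hv
      have hroot : v ≠ T.root := fun h => by simp [h, T.depth_root] at hdv
      have := T.depth_parent v hv hroot
      exact Finset.mem_biUnion.mpr ⟨T.parent v,
        Finset.mem_filter.mpr ⟨T.parent_mem v hv hroot, by omega⟩,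
        Finset.mem_filter.mpr ⟨hv, hroot, rfl⟩⟩
    calc _ ≤ _ := Finset.card_le_card hsub
      _ ≤ ∑ u ∈ T.verts.filter (fun v => T.depth v = k), (T.children u).card :=
        Finset.card_biUnion_le
      _ ≤ ∑ _u ∈ T.verts.filter (fun v => T.depth v = k), 2 :=
        Finset.sum_le_sum fun u hu => hT u (Finset.mem_filter.mp hu).1
      _ ≤ 2 ^ (k + 1) := by rw [Finset.sum_const, smul_eq_mul, pow_succ]; omega

lemma card_verts_le_two_pow_height (hT : T.IsBinary) : T.verts.card ≤ 2 ^ T.height := by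
  have hcover : T.verts ⊆
      (Finset.range T.height).biUnion (fun k => T.verts.filter (fun v => T.depth v = k)) :=
    fun v hv => Finset.mem_biUnion.mpr ⟨T.depth v,
      Finset.mem_range.mpr (Nat.lt_succ_of_le (Finset.le_sup hv)), Finset.mem_filter.mpr ⟨hv, rfl⟩⟩
  calc T.verts.card ≤ _ := Finset.card_le_card hcover
    _ ≤ ∑ k ∈ Finset.range T.height, (T.verts.filter (fun v => T.depth v = k)).card :=
      Finset.card_biUnion_le
    _ ≤ ∑ k ∈ Finset.range T.height, 2 ^ k :=
      Finset.sum_le_sum fun k _ => card_filter_depth_eq_le hT k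
    _ ≤ 2 ^ T.height := by
      rw [Nat.geomSum_eq le_rfl]
      exact (Nat.div_le_self _ _).trans (Nat.sub_le _ _)

/-- A deepest vertex is a leaf. -/
lemma exists_mem_leaves (T : RootedTree V) : ∃ v, v ∈ T.leaves := by
  obtain ⟨v, hv, hmax⟩ := T.verts.exists_max_image T.depth ⟨_, T.root_mem⟩
  refine ⟨v, Finset.mem_filter.mpr ⟨hv, Finset.eq_empty_of_forall_notMem fun w hw => ?_⟩⟩
  obtain ⟨hwv, hroot, rfl⟩ := Finset.mem_filter.mp hw
  have := T.depth_parent w hwv hroot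
  have := hmax w hwv
  omega

end RootedTree

namespace BTB

variable {V : Type} [DecidableEq V] [Fintype V] (H : BTB V)

lemma card_rootSet : H.rootSet.card = H.m := by
  rw [rootSet, Finset.card_image_of_injective _ H.roots_inj, Finset.card_univ, Fintype.card_fin]

lemma exists_isCommonLeaf (hm : 0 < H.m) : ∃ i j ℓ, H.IsCommonLeaf i j ℓ := by
  let i : Fin H.m := ⟨0, hm⟩
  obtain ⟨ℓ, hℓ⟩ := (H.tree i).exists_mem_leaves
  obtain ⟨j, hj, hji⟩ := Finset.exists_mem_ne (by rw [H.leaf_two i ℓ hℓ]; norm_num) i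
  exact ⟨i, j, ℓ, hji.symm, hℓ, (Finset.mem_filter.mp hj).2⟩

/-- The all-false assignment falsifies every clause of the monotone CNF `φ_H`. -/
lemma exists_assignsExactly_not_satisfiesPhi (hm : 0 < H.m) :
    ∃ S, AssignsExactly Finset.univ S ∧ ¬H.SatisfiesPhi S := by
  refine ⟨Finset.univ ×ˢ {false}, ⟨by simp, fun x _ => ⟨false, by simp, by simp⟩⟩, fun h => ?_⟩
  obtain ⟨i, j, ℓ, hℓ⟩ := H.exists_isCommonLeaf hm
  obtain ⟨v, -, hv⟩ := h i j ℓ hℓ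
  simp at hv

lemma card_le_sum_card_verts : Fintype.card V ≤ ∑ i, (H.tree i).verts.card :=
  calc Fintype.card V = (Finset.univ.biUnion fun i => (H.tree i).verts).card := by
        rw [Finset.eq_univ_of_forall fun v => Finset.mem_biUnion.mpr
          (by simpa using H.cover v), Finset.card_univ]
    _ ≤ _ := Finset.card_biUnion_le

variable {H}

lemma IsPseudoexpander.logb_card_le (hH : H.IsPseudoexpander) (hm : 0 < H.m) :
    Real.logb 2 (Fintype.card V) ≤ Real.logb 2 H.m + (Real.logb 2 H.m / 4.9 + 3) := by
  have hV : 0 < Fintype.card V := Fintype.card_pos_iff.mpr ⟨(H.tree ⟨0, hm⟩).root⟩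
  have hcard : (Fintype.card V : ℝ) ≤ H.m * 2 ^ (Real.logb 2 H.m / 4.9 + 3) :=
    calc (Fintype.card V : ℝ) ≤ ∑ i, ((H.tree i).verts.card : ℝ) := by
          exact_mod_cast H.card_le_sum_card_verts
      _ ≤ ∑ _i : Fin H.m, (2 : ℝ) ^ (Real.logb 2 H.m / 4.9 + 3) :=
          Finset.sum_le_sum fun i _ => calc
            ((H.tree i).verts.card : ℝ) ≤ (2 : ℝ) ^ ((H.tree i).height : ℝ) := by
              rw [Real.rpow_natCast]
              exact_mod_cast RootedTree.card_verts_le_two_pow_height (H.binary i)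
            _ ≤ _ := Real.rpow_le_rpow_of_exponent_le one_le_two (hH.1 i)
      _ = _ := by simp
  calc Real.logb 2 (Fintype.card V) ≤ Real.logb 2 (H.m * 2 ^ (Real.logb 2 H.m / 4.9 + 3)) :=
        Real.logb_le_logb_of_le one_lt_two (by exact_mod_cast hV) hcard
    _ = _ := by
      rw [Real.logb_mul (by positivity) (by positivity), Real.logb_rpow two_pos (by norm_num)]

end BTB

/-- A computational path of a uniform read-`0` program carries no literal. -/
lemma NBP.Computes.of_uniformReadTimes_zero {Var : Type} [DecidableEq Var] {Z : NBP Var}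
    {W : Finset Var} {F : Finset (Var × Bool) → Prop} (hc : Z.Computes W F)
    (hZ : Z.UniformReadTimes 0) {p : List (NBPEdge Var Z.n)} (hp : Z.IsCompPath p)
    {S : Finset (Var × Bool)} (hS : AssignsExactly W S) : F S := by
  have hlits : pathLits p = ∅ := Finset.eq_empty_of_forall_notMem fun l hl => by
    obtain ⟨e, he, hlab⟩ := List.mem_filterMap.mp (List.mem_toFinset.mp hl)
    have hvar : l.1 ∈ Z.vars := Finset.mem_biUnion.mpr ⟨e, hp.1.2.1 e he, by simp [hlab]⟩
    have hpos : l.1 ∈ pathVars p :=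
      List.mem_toFinset.mpr (List.mem_map.mpr ⟨l, List.mem_filterMap.mpr ⟨e, he, hlab⟩, rfl⟩)
    have := occCount_pos_iff.mpr hpos
    have := hZ.2 p hp.1 l.1 hvar
    omega
  exact (hc.2 S hS).mpr ⟨p, hp, by simp [hlits]⟩

lemma BTB.pos_of_uniformReadTimes {V : Type} [DecidableEq V] [Fintype V] {H : BTB V}
    (hm : 0 < H.m) {Z : NBP V} {d : ℕ} (hZ : Z.UniformReadTimes d)
    (hcomp : Z.Computes Finset.univ H.SatisfiesPhi) {p : List (NBPEdge V Z.n)}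
    (hp : Z.IsCompPath p) : 0 < d := by
  rcases Nat.eq_zero_or_pos d with rfl | hd
  · obtain ⟨S, hS, hnot⟩ := H.exists_assignsExactly_not_satisfiesPhi hm
    exact absurd (hcomp.of_uniformReadTimes_zero hZ hp hS) hnot
  · exact hd

lemma rpow_one_sub_le_of_le_mul {x c a ε : ℝ} (hx : 0 < x) (ha : 0 ≤ a) (hc : c ≤ x ^ ε)
    (h : x ≤ c * a) : x ^ (1 - ε) ≤ a := by
  have hxε : 0 < x ^ ε := Real.rpow_pos_of_pos hx ε
  refine le_of_mul_le_mul_right ?_ hxε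
  calc x ^ (1 - ε) * x ^ ε = x := by rw [← Real.rpow_add hx]; simp
    _ ≤ c * a := h
    _ ≤ a * x ^ ε := by rw [mul_comm]; exact mul_le_mul_of_nonneg_left hc ha

/-- Since `d ≪ log m`, losing a factor `2 ^ (4d + 3)` from `m` costs less than `m ^ 0.001`. -/
lemma BTB.IsPseudoexpander.rpow_le_of_le_mul {V : Type} [DecidableEq V] [Fintype V]
    {H : BTB V} (hH : H.IsPseudoexpander) (hm : 0 < H.m) {d s a : ℕ} (hd₁ : 1 ≤ d)
    (hd : (d : ℝ) ≤ Real.logb 2 (Fintype.card V) / 100000) (hs : H.m ≤ 2 * s + 1)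
    (ha : s ≤ 2 * 4 ^ (d + d) * a) : (H.m : ℝ) ^ (0.999 : ℝ) ≤ a := by
  have hlogn := hH.logb_card_le hm
  have hd₁' : (1 : ℝ) ≤ d := by exact_mod_cast hd₁
  have hlogm : ((4 * d + 3 : ℕ) : ℝ) ≤ Real.logb 2 H.m * 0.001 := by
    push_cast
    norm_num at hlogn ⊢
    linarith
  have hm₂ : 2 ≤ H.m := by
    by_contra! h
    rw [show H.m = 1 by omega] at hlogm
    norm_num at hlogm
    linarith
  have hc : (2 : ℝ) ^ (4 * d + 3) ≤ (H.m : ℝ) ^ (0.001 : ℝ) := by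
    rw [← Real.rpow_natCast, ← Real.rpow_logb (b := 2) (by norm_num) (by norm_num)
      (show (0 : ℝ) < H.m by exact_mod_cast hm), ← Real.rpow_mul (by norm_num)]
    exact Real.rpow_le_rpow_of_exponent_le one_le_two hlogm
  have hma : H.m ≤ 2 ^ (4 * d + 3) * a := by
    rw [show 2 ^ (4 * d + 3) = 8 * 4 ^ (d + d) by
      rw [pow_add, pow_mul, ← two_mul, pow_mul]; norm_num; ring]
    rw [mul_assoc] at ha ⊢
    generalize 4 ^ (d + d) * a = q at ha ⊢
    omega
  rw [show (0.999 : ℝ) = 1 - 0.001 by norm_num]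
  exact rpow_one_sub_le_of_le_mul (by exact_mod_cast hm) (Nat.cast_nonneg a) hc
    (by exact_mod_cast hma)

lemma exists_disjoint_halves {α : Type*} [DecidableEq α] (s : Finset α) :
    ∃ F ⊆ s, ∃ G ⊆ s, Disjoint F G ∧ s.card ≤ 2 * F.card + 1 ∧ s.card ≤ 2 * G.card + 1 := by
  obtain ⟨F, hF, hFcard⟩ := Finset.exists_subset_card_eq (Nat.div_le_self s.card 2)
  refine ⟨F, hF, s \ F, Finset.sdiff_subset, Finset.disjoint_sdiff, by omega, ?_⟩
  rw [Finset.card_sdiff_of_subset hF]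
  omega

/-- every computational path of a uniform read-`d`-times NBP computing
`φ_H`, `d ≤ (log₂ n)/10⁵`, contains a set `X` of at most `(log₂ n)/4000` vertices
separating two disjoint subsets of `Roots(H)` of size at least `m^0.999` each. -/
theorem statement_14 (V : Type) [DecidableEq V] [Fintype V] (H : BTB V)
    (hH : H.IsPseudoexpander) (Z : NBP V) (d : ℕ)
    (hZ : Z.UniformReadTimes d)
    (hcomp : Z.Computes Finset.univ H.SatisfiesPhi)
    (hd : (d : ℝ) ≤ Real.logb 2 (Fintype.card V) / 100000) :
    ∀ p, Z.IsCompPath p →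
      ∃ X ⊆ pathVertices p, (X.card : ℝ) ≤ Real.logb 2 (Fintype.card V) / 4000 ∧
        ∃ Y₁ Y₂ : Finset V, Y₁ ⊆ H.rootSet ∧ Y₂ ⊆ H.rootSet ∧
          (H.m : ℝ) ^ (0.999 : ℝ) ≤ Y₁.card ∧ (H.m : ℝ) ^ (0.999 : ℝ) ≤ Y₂.card ∧
          Z.Separates X Y₁ Y₂ := by
  intro p hp
  obtain ⟨F, hF, G, hG, hFG, hFcard, hGcard⟩ := exists_disjoint_halves H.rootSet
  obtain ⟨A, hAF, B, hBG, hAcard, hBcard, hsplit⟩ := admitsAlternatingSplit_of_occCount_le hFG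
    (fun x _ => hZ.1 p hp.1 x) (fun x _ => hZ.1 p hp.1 x)
  obtain ⟨X, hXp, hXcard, hsep⟩ := hp.exists_separates hsplit (hFG.mono hAF hBG)
    (by simp [hcomp.1]) (by simp [hcomp.1])
  have hsize : ∀ s a : ℕ, H.rootSet.card ≤ 2 * s + 1 → s ≤ 2 * 4 ^ (d + d) * a →
      (H.m : ℝ) ^ (0.999 : ℝ) ≤ a := by
    rw [H.card_rootSet]
    rcases Nat.eq_zero_or_pos H.m with hm | hm
    · intro s a _ _
      rw [hm, Nat.cast_zero, Real.zero_rpow (by norm_num)]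
      exact Nat.cast_nonneg a
    · exact fun s a => hH.rpow_le_of_le_mul hm (H.pos_of_uniformReadTimes hm hZ hcomp hp) hd
  refine ⟨X, hXp, ?_, A, B, hAF.trans hF, hBG.trans hG, hsize _ _ hFcard hAcard,
    hsize _ _ hGcard hBcard, hsep⟩
  have hX : (X.card : ℝ) ≤ 2 * d := by exact_mod_cast (by omega : X.card ≤ 2 * d)
  linarith [(Nat.cast_nonneg d : (0 : ℝ) ≤ d)]

end NBPPaper
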